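/- Let Γ be a cancellation monoid with neutral element e, A a Γ-graded local ring with maximal graded ideal 𝔐, and L a graded left ideal of A contained in 𝔐. Let M be a finitely generated Γ-graded A-module. If LM = M, then M = {0}. -/

import Mathlib

/-
Replace a finite generating set of `M` by the homogeneous components of its elements. Since `𝔐`
is generated by homogeneous elements it is a graded two-sided ideal, and `L ⊆ 𝔐` together with
`L • M = M` writes each generator `x`, of degree `γ`, as `x = ∑ cᵤ • u` with all `cᵤ ∈ 𝔐`.
Taking degree-`γ` components, cancellation in `Γ` leaves `d • x` with `d` the degree-`e` part
of `cₓ` as the only contribution to the `x`-term, so `(1 - d) • x` lies in the span of the other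
generators. As `d ∈ 𝔐 ∩ A_e`, the element `1 - d` is a unit (otherwise `1 ∈ 𝔐`), so `x` is
redundant; discarding the generators one by one leaves the empty set, so `M = 0`.
-/

section

variable {Γ : Type*} [AddCancelMonoid Γ] [DecidableEq Γ]
variable {A : Type*} [Ring A] (𝒜 : Γ → AddSubgroup A) [GradedRing 𝒜]

def maximalGradedIdeal : TwoSidedIdeal A :=
  TwoSidedIdeal.span {a : A | (a ≠ 0 ∧ ∃ γ : Γ, a ∈ 𝒜 γ) ∧ ¬IsUnit a}

end

open DirectSum SetLike

theorem DirectSum.coe_decompose_mem_of_mem_closure {Γ M σ : Type*} [DecidableEq Γ]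
    [AddCommGroup M] [SetLike σ M] [AddSubgroupClass σ M] (ℳ : Γ → σ) [Decomposition ℳ]
    {τ : Type*} [SetLike τ M] [AddSubgroupClass τ M] {I : τ} {y : M}
    (hy : y ∈ AddSubgroup.closure {z | z ∈ I ∧ IsHomogeneousElem ℳ z}) (γ : Γ) :
    (decompose ℳ y γ : M) ∈ I := by
  induction hy using AddSubgroup.closure_induction with
  | mem z hz =>
    obtain ⟨hzI, δ, hzδ⟩ := hz
    by_cases h : δ = γ
    · rwa [← h, decompose_of_mem_same ℳ hzδ]
    · rw [decompose_of_mem_ne ℳ hzδ h]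
      exact zero_mem I
  | zero => simp
  | add _ _ _ _ h₁ h₂ => simpa using add_mem h₁ h₂
  | neg _ _ h =>
    rw [decompose_neg, DFinsupp.neg_apply, NegMemClass.coe_neg]
    exact neg_mem h

theorem TwoSidedIdeal.coe_decompose_mem_span {Γ A σ : Type*} [AddMonoid Γ] [DecidableEq Γ]
    [Ring A] [SetLike σ A] [AddSubgroupClass σ A] (𝒜 : Γ → σ) [GradedRing 𝒜] {S : Set A}
    (hS : ∀ a ∈ S, IsHomogeneousElem 𝒜 a) {x : A} (hx : x ∈ span S) (γ : Γ) :
    (decompose 𝒜 x γ : A) ∈ span S := by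
  classical
  refine coe_decompose_mem_of_mem_closure 𝒜 (I := span S) ?_ γ
  rw [mem_span_iff_mem_addSubgroup_closure] at hx
  refine AddSubgroup.closure_le _ |>.mpr ?_ hx
  rintro _ ⟨_, ⟨a, -, s, hs, rfl⟩, b, -, rfl⟩
  change a * s * b ∈ AddSubgroup.closure _
  rw [← sum_support_decompose 𝒜 a, ← sum_support_decompose 𝒜 b, Finset.sum_mul, Finset.sum_mul]
  refine sum_mem fun α _ => ?_
  rw [Finset.mul_sum]
  refine sum_mem fun β _ => AddSubgroup.subset_closure ⟨?_, ?_⟩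
  · exact mul_mem_right _ _ _ (mul_mem_left _ _ _ (subset_span hs))
  · exact ((isHomogeneousElem_coe _).mul (hS s hs)).mul (isHomogeneousElem_coe _)

section GradedModule

variable {Γ A M σA σM : Type*} [AddMonoid Γ] [DecidableEq Γ] [Semiring A] [AddCommMonoid M]
  [Module A M] [SetLike σA A] [AddSubmonoidClass σA A] [SetLike σM M] [AddSubmonoidClass σM M]
  (𝒜 : Γ → σA) (ℳ : Γ → σM) [GradedRing 𝒜] [Decomposition ℳ]

theorem DirectSum.coe_decompose_smul_of_mem [GradedSMul 𝒜 ℳ]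
    [∀ (i : Γ) (x : 𝒜 i), Decidable (x ≠ 0)] (c : A) {u : M} {δ : Γ} (hu : u ∈ ℳ δ) (γ : Γ) :
    (decompose ℳ (c • u) γ : M) =
      ∑ β ∈ (decompose 𝒜 c).support with β + δ = γ, (decompose 𝒜 c β : A) • u := by
  conv_lhs => rw [← sum_support_decompose 𝒜 c, Finset.sum_smul, decompose_sum,
    DFinsupp.finsetSum_apply, AddSubmonoidClass.coe_finsetSum]
  rw [Finset.sum_filter]
  refine Finset.sum_congr rfl fun β _ => ?_
  have hmem : (decompose 𝒜 c β : A) • u ∈ ℳ (β + δ) := by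
    simpa only [vadd_eq_add] using GradedSMul.smul_mem (A := 𝒜) (coe_mem (decompose 𝒜 c β)) hu
  split_ifs with h
  · exact decompose_of_mem_same ℳ (h ▸ hmem)
  · exact decompose_of_mem_ne ℳ hmem h

theorem DirectSum.coe_decompose_smul_mem_span_singleton [GradedSMul 𝒜 ℳ] (c : A) {u : M}
    (hu : IsHomogeneousElem ℳ u) (γ : Γ) :
    (decompose ℳ (c • u) γ : M) ∈ Submodule.span A {u} := by
  classical
  obtain ⟨δ, hδ⟩ := hu
  rw [coe_decompose_smul_of_mem 𝒜 ℳ c hδ]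
  exact Submodule.sum_mem _ fun β _ => Submodule.smul_mem _ _ (Submodule.mem_span_singleton_self u)

theorem DirectSum.coe_decompose_smul_of_mem_self [GradedSMul 𝒜 ℳ] [IsRightCancelAdd Γ] (c : A)
    {u : M} {δ : Γ} (hu : u ∈ ℳ δ) :
    (decompose ℳ (c • u) δ : M) = (decompose 𝒜 c 0 : A) • u := by
  classical
  rw [coe_decompose_smul_of_mem 𝒜 ℳ c hu]
  simp +contextual [add_eq_right, Finset.sum_filter]

end GradedModule

theorem DirectSum.exists_finset_isHomogeneousElem_span_eq_top {Γ A M σ : Type*} [DecidableEq Γ]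
    [Semiring A] [AddCommMonoid M] [Module A M] [Module.Finite A M] [SetLike σ M]
    [AddSubmonoidClass σ M] (ℳ : Γ → σ) [Decomposition ℳ] :
    ∃ s : Finset M, (∀ u ∈ s, IsHomogeneousElem ℳ u) ∧ Submodule.span A (s : Set M) = ⊤ := by
  classical
  obtain ⟨t, ht⟩ := Module.Finite.fg_top (R := A) (M := M)
  refine ⟨t.biUnion fun m => (decompose ℳ m).support.image fun γ => (decompose ℳ m γ : M),
    ?_, eq_top_iff.mpr (ht ▸ Submodule.span_le.mpr fun m hm => ?_)⟩
  · simp only [Finset.mem_biUnion, Finset.mem_image]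
    rintro _ ⟨m, -, γ, -, rfl⟩
    exact isHomogeneousElem_coe _
  · rw [← sum_support_decompose ℳ m]
    refine Submodule.sum_mem _ fun γ hγ => Submodule.subset_span ?_
    exact Finset.mem_biUnion.mpr ⟨m, hm, Finset.mem_image_of_mem _ hγ⟩

theorem Submodule.exists_sum_smul_of_mem_span_smul {A M : Type*} [Ring A] [AddCommMonoid M]
    [Module A M] {L : Ideal A} {I : TwoSidedIdeal A} (hLI : ∀ x ∈ L, x ∈ I) {s : Finset M}
    (hs : span A (s : Set M) = ⊤) {m : M}
    (hm : m ∈ span A {x : M | ∃ l ∈ L, ∃ m' : M, x = l • m'}) :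
    ∃ c : M → A, (∀ u, c u ∈ I) ∧ ∑ u ∈ s, c u • u = m := by
  induction hm using span_induction with
  | mem _ hx =>
    obtain ⟨l, hl, m', rfl⟩ := hx
    obtain ⟨f, -, hf⟩ := mem_span_finset.mp (hs ▸ mem_top : m' ∈ span A (s : Set M))
    refine ⟨fun u => l * f u, fun u => I.mul_mem_right _ _ (hLI l hl), ?_⟩
    simp only [← hf, Finset.smul_sum, mul_smul]
  | zero => exact ⟨0, fun _ => I.zero_mem, by simp⟩
  | add _ _ _ _ hx hy =>
    obtain ⟨c, hc, rfl⟩ := hx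
    obtain ⟨c', hc', rfl⟩ := hy
    exact ⟨c + c', fun u => I.add_mem (hc u) (hc' u), by simp [add_smul, Finset.sum_add_distrib]⟩
  | smul a _ _ hx =>
    obtain ⟨c, hc, rfl⟩ := hx
    exact ⟨fun u => a * c u, fun u => I.mul_mem_left a _ (hc u), by simp [Finset.smul_sum, mul_smul]⟩

section

variable {Γ : Type*} [AddCancelMonoid Γ] [DecidableEq Γ]
variable {A : Type*} [Ring A] (𝒜 : Γ → AddSubgroup A) [GradedRing 𝒜]

theorem coe_decompose_mem_maximalGradedIdeal {x : A} (hx : x ∈ maximalGradedIdeal 𝒜) (γ : Γ) :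
    (decompose 𝒜 x γ : A) ∈ maximalGradedIdeal 𝒜 :=
  TwoSidedIdeal.coe_decompose_mem_span 𝒜 (fun _ ha => ha.1.2) hx γ

theorem isUnit_one_sub_of_mem_maximalGradedIdeal (hloc : maximalGradedIdeal 𝒜 ≠ ⊤) {a : A}
    (ha₀ : a ∈ 𝒜 0) (ha : a ∈ maximalGradedIdeal 𝒜) : IsUnit (1 - a) := by
  by_contra hu
  refine hloc (TwoSidedIdeal.eq_top _ ?_)
  have h1a : 1 - a ∈ maximalGradedIdeal 𝒜 := by
    by_cases h0 : 1 - a = 0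
    · rw [h0]
      exact (maximalGradedIdeal 𝒜).zero_mem
    · exact TwoSidedIdeal.subset_span
        ⟨⟨h0, 0, (𝒜 0).sub_mem (SetLike.one_mem_graded 𝒜) ha₀⟩, hu⟩
  simpa using (maximalGradedIdeal 𝒜).add_mem h1a ha

theorem mem_span_erase_of_sum_smul_eq {M : Type*} [AddCommGroup M] [Module A M] [DecidableEq M]
    (ℳ : Γ → AddSubgroup M) [GradedSMul 𝒜 ℳ] [Decomposition ℳ]
    (hloc : maximalGradedIdeal 𝒜 ≠ ⊤) {s : Finset M}
    (hs : ∀ u ∈ s, IsHomogeneousElem ℳ u) {x : M} (hx : x ∈ s) {c : M → A}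
    (hc : ∀ u, c u ∈ maximalGradedIdeal 𝒜) (hcx : ∑ u ∈ s, c u • u = x) :
    x ∈ Submodule.span A (s.erase x : Set M) := by
  obtain ⟨γ, hγ⟩ := hs x hx
  have hx_eq : x = (decompose 𝒜 (c x) 0 : A) • x +
      ∑ u ∈ s.erase x, (decompose ℳ (c u • u) γ : M) := by
    conv_lhs => rw [← decompose_of_mem_same ℳ hγ, ← hcx]
    rw [decompose_sum, DFinsupp.finsetSum_apply, AddSubmonoidClass.coe_finsetSum,
      ← Finset.add_sum_erase _ _ hx, coe_decompose_smul_of_mem_self 𝒜 ℳ _ hγ]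
  have hrest : ∑ u ∈ s.erase x, (decompose ℳ (c u • u) γ : M) ∈
      Submodule.span A (s.erase x : Set M) :=
    Submodule.sum_mem _ fun u hu => Submodule.span_mono (Set.singleton_subset_iff.mpr hu)
      (coe_decompose_smul_mem_span_singleton 𝒜 ℳ _ (hs u (Finset.mem_of_mem_erase hu)) γ)
  have hunit : IsUnit (1 - (decompose 𝒜 (c x) 0 : A)) :=
    isUnit_one_sub_of_mem_maximalGradedIdeal 𝒜 hloc (coe_mem _)
      (coe_decompose_mem_maximalGradedIdeal 𝒜 (hc x) 0)
  rw [← Submodule.smul_mem_iff_of_isUnit _ hunit, sub_smul, one_smul]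
  convert hrest using 1
  exact sub_eq_of_eq_add' hx_eq

theorem eq_zero_of_graded_left_ideal_smul_eq_self
    (hloc : maximalGradedIdeal 𝒜 ≠ ⊤)
    (L : Ideal A)
    (hL𝔐 : ∀ x ∈ L, x ∈ maximalGradedIdeal 𝒜)
    {M : Type*} [AddCommGroup M] [Module A M] [Module.Finite A M]
    (ℳ : Γ → AddSubgroup M) [SetLike.GradedSMul 𝒜 ℳ] [DirectSum.Decomposition ℳ]
    (hLM : Submodule.span A {x : M | ∃ l ∈ L, ∃ m : M, x = l • m} = ⊤) :
    ∀ m : M, m = 0 := by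
  classical
  obtain ⟨s, hs, hspan⟩ := exists_finset_isHomogeneousElem_span_eq_top (A := A) ℳ
  induction s using Finset.strongInduction with
  | H s ih =>
    rcases s.eq_empty_or_nonempty with rfl | ⟨x, hx⟩
    · intro m
      simpa [← hspan] using (Submodule.mem_top : m ∈ (⊤ : Submodule A M))
    obtain ⟨c, hc, hcx⟩ :=
      Submodule.exists_sum_smul_of_mem_span_smul hL𝔐 hspan (hLM ▸ Submodule.mem_top)
    have hx_mem := mem_span_erase_of_sum_smul_eq 𝒜 ℳ hloc hs hx hc hcx
    refine ih _ (Finset.erase_ssubset hx) (fun u hu => hs u (Finset.mem_of_mem_erase hu)) ?_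
    rwa [← Submodule.span_insert_eq_span hx_mem, ← Finset.coe_insert, Finset.insert_erase hx]

end
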